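/- arXiv:1902.09788 — 5 statements merged into one kernel-verified Lean document; each statement's English description precedes it below -/
import Mathlib

section
/- Let A : H → H be μ-strongly monotone and β-cocoercive (0 < μ ≤ 1/β), α > 0, and suppose J = (I + αA)⁻¹ exists as a single-valued map on H. Then 2J − I is R-Lipschitz with R² = 1 − 4αμ/(1 + 2αμ + α²μ/β), i.e., ‖(2J u − u) − (2J v − v)‖² ≤ R²‖u − v‖² for all u, v. -/
open InnerProductSpace

theorem srg_stmt6 {H : Type*} [NormedAddCommGroup H] [InnerProductSpace ℝ H]
    (A : H → H) (J : H → H) (μ β α : ℝ) (hμ : 0 < μ) (hβ : 0 < β)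
    (hμβ : μ ≤ 1 / β) (hα : 0 < α)
    (hmono : ∀ x y : H, ⟪A x - A y, x - y⟫_ℝ ≥ μ * ‖x - y‖ ^ 2)
    (hcoco : ∀ x y : H, ⟪A x - A y, x - y⟫_ℝ ≥ β * ‖A x - A y‖ ^ 2)
    (hres : ∀ u : H, J u + α • A (J u) = u) :
    ∀ u v : H,
      ‖((2 : ℝ) • J u - u) - ((2 : ℝ) • J v - v)‖ ^ 2
        ≤ (1 - 4 * α * μ / (1 + 2 * α * μ + α ^ 2 * μ / β)) * ‖u - v‖ ^ 2 := by
  intro u v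
  have hu := hres u
  have hv := hres v
  have hid := hmono (J u) (J v)
  have hia := hcoco (J u) (J v)
  set x := J u
  set y := J v
  set d := x - y with hd
  set a := A x - A y with ha
  have e1 : (2:ℝ) • x - u - ((2:ℝ) • y - v) = d - α • a := by
    rw [hd, ha, ← hu, ← hv]; module
  have e2 : u - v = d + α • a := by
    rw [hd, ha, ← hu, ← hv]; module
  rw [e1, e2, norm_sub_sq_real, norm_add_sq_real, real_inner_smul_right, norm_smul,
    real_inner_comm a d]
  have habs : |α| = α := abs_of_pos hα
  rw [Real.norm_eq_abs, habs]
  set P := ‖d‖ ^ 2 with hP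
  set Q := ‖a‖ ^ 2 with hQ
  set S := ⟪a, d⟫_ℝ with hS
  have hPn : 0 ≤ P := by positivity
  have hQn : 0 ≤ Q := by positivity
  have hβne : β ≠ 0 := ne_of_gt hβ
  have hD : 0 < 1 + 2 * α * μ + α ^ 2 * μ / β := by positivity
  have hDne : (1 + 2 * α * μ + α ^ 2 * μ / β) ≠ 0 := ne_of_gt hD
  have key : μ * β * P + μ * α ^ 2 * β * Q ≤ (β + α ^ 2 * μ) * S := by
    nlinarith [mul_le_mul_of_nonneg_left hid (le_of_lt hβ),
      mul_le_mul_of_nonneg_left hia (by positivity : (0:ℝ) ≤ α ^ 2 * μ)]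
  rw [hQ] at key
  have ring_eq : 1 - 4 * α * μ / (1 + 2 * α * μ + α ^ 2 * μ / β)
      = 1 - 4 * α * μ * β / (β + 2 * α * μ * β + α ^ 2 * μ) := by
    field_simp
  rw [ring_eq]
  have hD' : 0 < β + 2 * α * μ * β + α ^ 2 * μ := by positivity
  set t := 4 * α * μ * β / (β + 2 * α * μ * β + α ^ 2 * μ) with htdef
  have ht : t * (β + 2 * α * μ * β + α ^ 2 * μ) = 4 * α * μ * β := by
    rw [htdef]; field_simp
  have hfrac : t * (P + 2 * (α * S) + (α * ‖a‖) ^ 2) ≤ 4 * α * S := by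
    rw [htdef, div_mul_eq_mul_div, div_le_iff₀ hD']
    nlinarith [mul_le_mul_of_nonneg_left key (by positivity : (0:ℝ) ≤ 4 * α), hQ,
      mul_pos hα hμ, hia, hQn]
  nlinarith [hfrac]
end

section
/- If T₁ and T₂ are firmly nonexpansive operators on a Hilbert space H, then T₁ ∘ T₂ is (2/3)-averaged, i.e., there exists a nonexpansive R : H → H with T₁ ∘ T₂ = (1/3)I + (2/3)R. -/
open InnerProductSpace

private lemma srg_aux {H : Type*} [NormedAddCommGroup H] [InnerProductSpace ℝ H]
    (u w v : H) (hu : ‖u‖ ^ 2 ≤ ⟪u, w⟫_ℝ) (hw : ‖w‖ ^ 2 ≤ ⟪w, v⟫_ℝ) :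
    ‖(3/2 : ℝ) • u - (1/2 : ℝ) • v‖ ≤ ‖v‖ := by
  have hsq : (0:ℝ) ≤ ‖u - (2:ℝ) • w + v‖ ^ 2 := sq_nonneg _
  have e1 : ‖u - (2:ℝ) • w + v‖ ^ 2
      = ‖u‖^2 + 4*‖w‖^2 + ‖v‖^2 - 4*⟪u,w⟫_ℝ + 2*⟪u,v⟫_ℝ - 4*⟪w,v⟫_ℝ := by
    simp only [← real_inner_self_eq_norm_sq, inner_add_left, inner_add_right,
      inner_sub_left, inner_sub_right, real_inner_smul_left, real_inner_smul_right]
    rw [real_inner_comm v u, real_inner_comm w u, real_inner_comm v w]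
    ring
  have key : 3*‖u‖^2 ≤ 2*⟪u,v⟫_ℝ + ‖v‖^2 := by linarith [hsq, e1.symm ▸ hsq]
  have e2 : ‖(3/2 : ℝ) • u - (1/2 : ℝ) • v‖ ^ 2
      = (9/4)*‖u‖^2 - (3/2)*⟪u,v⟫_ℝ + (1/4)*‖v‖^2 := by
    simp only [← real_inner_self_eq_norm_sq, inner_sub_left, inner_sub_right,
      real_inner_smul_left, real_inner_smul_right]
    rw [real_inner_comm v u]
    ring
  have hle : ‖(3/2 : ℝ) • u - (1/2 : ℝ) • v‖ ^ 2 ≤ ‖v‖ ^ 2 := by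
    rw [e2]; linarith
  nlinarith [norm_nonneg ((3/2 : ℝ) • u - (1/2 : ℝ) • v), norm_nonneg v, hle]

theorem srg_stmt9 {H : Type*} [NormedAddCommGroup H] [InnerProductSpace ℝ H]
    (T₁ T₂ : H → H)
    (h₁ : ∀ x y : H, ‖T₁ x - T₁ y‖ ^ 2 ≤ ⟪T₁ x - T₁ y, x - y⟫_ℝ)
    (h₂ : ∀ x y : H, ‖T₂ x - T₂ y‖ ^ 2 ≤ ⟪T₂ x - T₂ y, x - y⟫_ℝ) :
    ∃ R : H → H, (∀ x y : H, ‖R x - R y‖ ≤ ‖x - y‖) ∧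
      ∀ x : H, T₁ (T₂ x) = (1 / 3 : ℝ) • x + (2 / 3 : ℝ) • R x := by
  refine ⟨fun x => (3/2 : ℝ) • T₁ (T₂ x) - (1/2 : ℝ) • x, ?_, ?_⟩
  · intro x y
    show ‖((3/2 : ℝ) • T₁ (T₂ x) - (1/2 : ℝ) • x) - ((3/2 : ℝ) • T₁ (T₂ y) - (1/2 : ℝ) • y)‖
        ≤ ‖x - y‖
    have hR : ((3/2 : ℝ) • T₁ (T₂ x) - (1/2 : ℝ) • x) - ((3/2 : ℝ) • T₁ (T₂ y) - (1/2 : ℝ) • y)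
        = (3/2 : ℝ) • (T₁ (T₂ x) - T₁ (T₂ y)) - (1/2 : ℝ) • (x - y) := by module
    rw [hR]
    exact srg_aux _ (T₂ x - T₂ y) _ (h₁ (T₂ x) (T₂ y)) (h₂ x y)
  · intro x
    show T₁ (T₂ x) = (1 / 3 : ℝ) • x + (2 / 3 : ℝ) • ((3/2 : ℝ) • T₁ (T₂ x) - (1/2 : ℝ) • x)
    module
end

section
/- Let A be μ-strongly monotone and β-cocoercive on ℝ² (realized as multiplication by a complex number), and let z ∈ ℂ satisfy Re z ≥ μ and Re z ≥ β|z|². Then |((1+αz)⁻¹·2 − 1)|² ≤ 1 − 4αμ/(1 + 2αμ + α²μ/β) for every α > 0, with 0 < μ ≤ 1/β. Equivalently: the image of the region {z : Re z ≥ μ, Re z ≥ β|z|²} under z ↦ (1 − αz)/(1 + αz) is contained in the closed disk of radius √(1 − 4αμ/(1+2αμ+α²μ/β)) centered at 0. -/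
/-!
Write `x = Re z`. The Cayley-type map satisfies `|(1 - w)/(1 + w)|² = 1 - 4 Re w / |1 + w|²`, and for
`w = αz` cocoercivity `|z|² ≤ x/β` bounds the denominator by `1 + (2α + α²/β) x`. Hence the squared
modulus is at most `1 - 4α · x/(1 + (2α + α²/β) x)`, and since `t ↦ t/(1 + ct)` is increasing on
`t ≥ 0`, the worst case is `x = μ`.
-/

open Complex

theorem Complex.sq_norm_one_add (w : ℂ) : ‖1 + w‖ ^ 2 = 1 + 2 * w.re + ‖w‖ ^ 2 := by
  simp only [Complex.sq_norm, normSq_apply, add_re, add_im, one_re, one_im]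
  ring

theorem Complex.sq_norm_one_sub_div_one_add {w : ℂ} (hw : 1 + w ≠ 0) :
    ‖(1 - w) / (1 + w)‖ ^ 2 = 1 - 4 * w.re / ‖1 + w‖ ^ 2 := by
  have hden : ‖1 + w‖ ^ 2 ≠ 0 := by positivity
  have hnum : ‖1 - w‖ ^ 2 = ‖1 + w‖ ^ 2 - 4 * w.re := by
    rw [sub_eq_add_neg, sq_norm_one_add, sq_norm_one_add, neg_re, norm_neg]
    ring
  rw [norm_div, div_pow, hnum, sub_div, div_self hden]

theorem div_one_add_mul_le_div_one_add_mul {c s t : ℝ} (hc : 0 ≤ c) (hs : 0 ≤ s) (hst : s ≤ t) :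
    s / (1 + c * s) ≤ t / (1 + c * t) := by
  rw [div_le_div_iff₀ (by positivity) (by nlinarith)]
  linarith

theorem sq_norm_one_add_ofReal_mul_le {α β : ℝ} (hβ : 0 < β) {z : ℂ} (hz : β * ‖z‖ ^ 2 ≤ z.re) :
    ‖1 + α * z‖ ^ 2 ≤ 1 + (2 * α + α ^ 2 / β) * z.re := by
  have hnorm : ‖z‖ ^ 2 ≤ z.re / β := by rw [le_div_iff₀ hβ]; linarith
  rw [sq_norm_one_add, re_ofReal_mul, norm_mul, mul_pow, norm_real, Real.norm_eq_abs, sq_abs]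
  calc 1 + 2 * (α * z.re) + α ^ 2 * ‖z‖ ^ 2 ≤ 1 + 2 * (α * z.re) + α ^ 2 * (z.re / β) := by
        gcongr
    _ = 1 + (2 * α + α ^ 2 / β) * z.re := by ring

theorem srg_stmt14_general (μ β α : ℝ) (hμ : 0 < μ) (hβ : 0 < β) (hα : 0 < α) :
    ∀ z : ℂ, μ ≤ z.re → β * ‖z‖ ^ 2 ≤ z.re →
      ‖(1 - α * z) / (1 + α * z)‖ ^ 2
        ≤ 1 - 4 * α * μ / (1 + 2 * α * μ + α ^ 2 * μ / β) := by
  intro z hμz hβz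
  have hc : 0 ≤ 2 * α + α ^ 2 / β := by positivity
  have hx : 0 < z.re := hμ.trans_le hμz
  have hden : 0 < ‖1 + α * z‖ ^ 2 := by rw [sq_norm_one_add, re_ofReal_mul]; positivity
  rw [sq_norm_one_sub_div_one_add (by rintro h; simp [h] at hden)]
  calc 1 - 4 * (α * z : ℂ).re / ‖1 + α * z‖ ^ 2
      ≤ 1 - 4 * α * (z.re / (1 + (2 * α + α ^ 2 / β) * z.re)) := by
        rw [re_ofReal_mul, ← mul_assoc, mul_div_assoc']
        gcongr
        exact sq_norm_one_add_ofReal_mul_le hβ hβz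
    _ ≤ 1 - 4 * α * (μ / (1 + (2 * α + α ^ 2 / β) * μ)) := by
        gcongr 1 - 4 * α * ?_
        exact div_one_add_mul_le_div_one_add_mul hc hμ.le hμz
    _ = 1 - 4 * α * μ / (1 + 2 * α * μ + α ^ 2 * μ / β) := by ring

theorem srg_stmt14 (μ β α : ℝ) (hμ : 0 < μ) (hβ : 0 < β) (hα : 0 < α)
    (hμβ : μ * β ≤ 1) :
    ∀ z : ℂ, μ ≤ z.re → β * ‖z‖ ^ 2 ≤ z.re →
      ‖(1 - α * z) / (1 + α * z)‖ ^ 2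
        ≤ 1 - 4 * α * μ / (1 + 2 * α * μ + α ^ 2 * μ / β) :=
  srg_stmt14_general μ β α hμ hβ hα
end

section
/- Let 0 < μ < L and α > 0. For every complex z with μ ≤ Re z and |z − (μ+L)/2| ≤ (L−μ)/2 (the disk with diameter [μ, L] on the real axis), the Möbius image w = (1 − αz)/(1 + αz) satisfies |w| ≤ max{ |1−αμ|/(1+αμ), |1−αL|/(1+αL) }. -/
/-!
With `M` the bound and `m = M² ≤ 1`,
`|1 - αz|² - m|1 + αz|² = (1 - m)(1 + α²|z|²) - 2α(1 + m) Re z`, and the disk condition reads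
`|z|² ≤ (μ + L) Re z - μL`. Substituting gives an upper bound affine in `Re z` which coincides
with `|1 - αt|² - m(1 + αt)²` at `t = μ` and `t = L`, where it is `≤ 0` by the choice of `M`;
being affine, it is `≤ 0` on all of `[μ, L]`, which contains `Re z`.
-/

lemma affine_nonpos_of_mul_sub_sub_nonpos {p q a b x : ℝ} (hx : (x - a) * (x - b) ≤ 0)
    (ha : p + q * a ≤ 0) (hb : p + q * b ≤ 0) : p + q * x ≤ 0 := by
  rcases mul_nonpos_iff.1 hx with ⟨hxa, hxb⟩ | ⟨hxa, hxb⟩ <;>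
    rcases le_total 0 q with hq | hq <;> nlinarith

namespace Complex

lemma normSq_le_of_norm_sub_midpoint_le {a b : ℝ} {z : ℂ}
    (hz : ‖z - ((a + b) / 2 : ℝ)‖ ≤ (b - a) / 2) : normSq z ≤ (a + b) * z.re - a * b := by
  have hsq := pow_le_pow_left₀ (norm_nonneg _) hz 2
  rw [← normSq_eq_norm_sq, normSq_apply] at hsq
  simp only [sub_re, sub_im, ofReal_re, ofReal_im, sub_zero] at hsq
  rw [normSq_apply]
  nlinarith

lemma normSq_one_sub_mul_sub_mul_normSq_one_add_mul (α m : ℝ) (z : ℂ) :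
    normSq (1 - α * z) - m * normSq (1 + α * z)
      = (1 - m) * (1 + α ^ 2 * normSq z) - 2 * α * (1 + m) * z.re := by
  simp only [normSq_apply, sub_re, add_re, sub_im, add_im, mul_re, mul_im, one_re, one_im,
    ofReal_re, ofReal_im]
  ring

lemma normSq_one_sub_mul_le {a b α m : ℝ} {z : ℂ} (hm : m ≤ 1)
    (hz : ‖z - ((a + b) / 2 : ℝ)‖ ≤ (b - a) / 2)
    (ha : (1 - α * a) ^ 2 ≤ m * (1 + α * a) ^ 2) (hb : (1 - α * b) ^ 2 ≤ m * (1 + α * b) ^ 2) :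
    normSq (1 - α * z) ≤ m * normSq (1 + α * z) := by
  have hdisk := normSq_le_of_norm_sub_midpoint_le hz
  have hre : (z.re - a) * (z.re - b) ≤ 0 := by nlinarith [re_sq_le_normSq z]
  have hline := affine_nonpos_of_mul_sub_sub_nonpos (p := (1 - m) * (1 - α ^ 2 * (a * b)))
    (q := (1 - m) * α ^ 2 * (a + b) - 2 * α * (1 + m)) hre (by linarith) (by linarith)
  have := normSq_one_sub_mul_sub_mul_normSq_one_add_mul α m z
  nlinarith [mul_le_mul_of_nonneg_left hdisk (mul_nonneg (sub_nonneg.2 hm) (sq_nonneg α))]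

lemma norm_div_le_of_normSq_le {u v : ℂ} {M : ℝ} (hM : 0 ≤ M)
    (h : normSq u ≤ M ^ 2 * normSq v) : ‖u / v‖ ≤ M := by
  rw [norm_div]
  refine div_le_of_le_mul₀ (norm_nonneg v) hM ((sq_le_sq₀ (norm_nonneg u) ?_).1 ?_)
  · positivity
  · rwa [mul_pow, ← normSq_eq_norm_sq, ← normSq_eq_norm_sq]

end Complex

lemma abs_one_sub_div_one_add_le_one {s : ℝ} (hs : 0 ≤ s) : |1 - s| / (1 + s) ≤ 1 := by
  rw [div_le_one (by linarith), abs_le]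
  constructor <;> linarith

lemma sq_le_sq_mul_of_abs_div_le {p q M : ℝ} (hq : 0 < q) (h : |p| / q ≤ M) :
    p ^ 2 ≤ M ^ 2 * q ^ 2 := by
  rw [← sq_abs, ← mul_pow]
  exact pow_le_pow_left₀ (abs_nonneg p) ((div_le_iff₀ hq).1 h) 2

theorem srg_stmt15_general (μ L α : ℝ) (hμ : 0 < μ) (hα : 0 < α) :
    ∀ z : ℂ, μ ≤ z.re → ‖z - ((μ + L) / 2 : ℝ)‖ ≤ (L - μ) / 2 →
      ‖(1 - α * z) / (1 + α * z)‖
        ≤ max (|1 - α * μ| / (1 + α * μ)) (|1 - α * L| / (1 + α * L)) := by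
  intro z _ hz
  have hμL : μ ≤ L := by linarith [(norm_nonneg _).trans hz]
  have hαμ : 0 ≤ α * μ := by positivity
  have hαL : 0 ≤ α * L := by nlinarith
  set M := max (|1 - α * μ| / (1 + α * μ)) (|1 - α * L| / (1 + α * L))
  have hM₀ : 0 ≤ M := le_max_of_le_left (by positivity)
  have hM₁ : M ≤ 1 :=
    max_le (abs_one_sub_div_one_add_le_one hαμ) (abs_one_sub_div_one_add_le_one hαL)
  refine Complex.norm_div_le_of_normSq_le hM₀ (Complex.normSq_one_sub_mul_le ?_ hz ?_ ?_)
  · nlinarith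
  · exact sq_le_sq_mul_of_abs_div_le (by linarith) (le_max_left _ _)
  · exact sq_le_sq_mul_of_abs_div_le (by linarith) (le_max_right _ _)

theorem srg_stmt15 (μ L α : ℝ) (hμ : 0 < μ) (hμL : μ < L) (hα : 0 < α) :
    ∀ z : ℂ, μ ≤ z.re → ‖z - ((μ + L) / 2 : ℝ)‖ ≤ (L - μ) / 2 →
      ‖(1 - α * z) / (1 + α * z)‖
        ≤ max (|1 - α * μ| / (1 + α * μ)) (|1 - α * L| / (1 + α * L)) :=
  srg_stmt15_general μ L α hμ hα
end

section
/- The Minkowski product of the closed disk D = {z ∈ ℂ : |z − 1/2| ≤ 1/2} with itself equals the cardioid region {r e^{iφ} : −π < φ ≤ π, 0 ≤ r ≤ cos²(φ/2)}. In particular D·D is strictly contained in the disk {z : |z − 1/3| ≤ 2/3}. -/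
def srgDisk : Set ℂ := {z : ℂ | ‖z - 1 / 2‖ ≤ 1 / 2}

/-!
`srgDisk` is `‖z‖² ≤ re z`. For `z = z₁ z₂` with both factors in it, `‖z‖² ≤ re z₁ re z₂`, and
Cauchy–Schwarz `re z₁ re z₂ + im z₁ im z₂ = re (z₁ conj z₂) ≤ ‖z‖` turns `2 re z₁ re z₂` into
`‖z‖ + re z`. So the product lands in `2 ‖z‖² ≤ ‖z‖ + re z`, which for `z = r e^{iφ}` reads
`r ≤ (1 + cos φ) / 2 = cos² (φ / 2)`. Conversely `r e^{iφ}` is the square of `√r e^{iφ/2}`,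
and `√r ≤ cos (φ / 2)` puts that root in `srgDisk`. The cardioid satisfies
`‖z - 1/3‖² ≤ 4/9 - (‖z‖ - 1)² / 3` but misses the point `-1/3` of the larger disk.
-/

open Complex ComplexConjugate

def cardioid : Set ℂ := {z : ℂ | 2 * ‖z‖ ^ 2 ≤ ‖z‖ + z.re}

lemma mem_srgDisk_iff_sq_norm_le_re (z : ℂ) : z ∈ srgDisk ↔ ‖z‖ ^ 2 ≤ z.re := by
  have hsq : ‖z - 1 / 2‖ ^ 2 = ‖z‖ ^ 2 - z.re + 1 / 4 := by
    simp only [Complex.sq_norm, normSq_apply, sub_re, sub_im, div_re, div_im]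
    norm_num
    ring
  rw [srgDisk, Set.mem_ofPred_eq, ← sq_le_sq₀ (norm_nonneg _) (by norm_num), hsq]
  constructor <;> intro h <;> linarith

lemma ofReal_mul_exp_mem_srgDisk {r φ : ℝ} (hr : 0 ≤ r) (hrφ : r ≤ Real.cos φ) :
    (r : ℂ) * exp (φ * I) ∈ srgDisk := by
  rw [mem_srgDisk_iff_sq_norm_le_re, norm_mul, norm_exp_ofReal_mul_I, norm_real, Real.norm_of_nonneg hr,
    re_ofReal_mul, exp_ofReal_mul_I_re, mul_one, sq]
  exact mul_le_mul_of_nonneg_left hrφ hr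

lemma mul_mem_cardioid {z₁ z₂ : ℂ} (h₁ : z₁ ∈ srgDisk) (h₂ : z₂ ∈ srgDisk) :
    z₁ * z₂ ∈ cardioid := by
  rw [mem_srgDisk_iff_sq_norm_le_re] at h₁ h₂
  have hre₁ : 0 ≤ z₁.re := (sq_nonneg _).trans h₁
  have hprod : ‖z₁ * z₂‖ ^ 2 ≤ z₁.re * z₂.re := by
    rw [norm_mul, mul_pow]
    exact mul_le_mul h₁ h₂ (sq_nonneg _) hre₁
  have hcs : z₁.re * z₂.re + z₁.im * z₂.im ≤ ‖z₁ * z₂‖ := by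
    simpa using re_le_norm (z₁ * conj z₂)
  show 2 * ‖z₁ * z₂‖ ^ 2 ≤ ‖z₁ * z₂‖ + (z₁ * z₂).re
  rw [mul_re]
  linarith

lemma image2_mul_srgDisk_subset_cardioid : Set.image2 (· * ·) srgDisk srgDisk ⊆ cardioid := by
  rintro _ ⟨z₁, h₁, z₂, h₂, rfl⟩
  exact mul_mem_cardioid h₁ h₂

lemma ofReal_mul_exp_mem_image2_mul_srgDisk {r φ : ℝ} (hφ₁ : -Real.pi < φ) (hφ₂ : φ ≤ Real.pi)
    (hr : 0 ≤ r) (hrφ : r ≤ Real.cos (φ / 2) ^ 2) :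
    (r : ℂ) * exp (φ * I) ∈ Set.image2 (· * ·) srgDisk srgDisk := by
  have hcos : 0 ≤ Real.cos (φ / 2) := Real.cos_nonneg_of_mem_Icc ⟨by linarith, by linarith⟩
  have hsqrt : √r ≤ Real.cos (φ / 2) := Real.sqrt_le_iff.mpr ⟨hcos, hrφ⟩
  have hw := ofReal_mul_exp_mem_srgDisk (Real.sqrt_nonneg r) hsqrt
  refine ⟨_, hw, _, hw, ?_⟩
  show (√r : ℂ) * exp (↑(φ / 2) * I) * ((√r : ℂ) * exp (↑(φ / 2) * I)) = r * exp (φ * I)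
  rw [mul_mul_mul_comm, ← ofReal_mul, Real.mul_self_sqrt hr, ← exp_add]
  push_cast
  ring_nf

lemma norm_le_cos_sq_half_arg {z : ℂ} (hz : z ∈ cardioid) :
    ‖z‖ ≤ Real.cos (arg z / 2) ^ 2 := by
  rcases eq_or_ne z 0 with rfl | hz0
  · simp
  have hpos : 0 < ‖z‖ := norm_pos_iff.mpr hz0
  have hcos : Real.cos (arg z / 2) ^ 2 = (1 + Real.cos (arg z)) / 2 := by
    rw [Real.cos_sq, mul_div_cancel₀ _ two_ne_zero]
    ring
  rw [hcos, ← mul_le_mul_iff_of_pos_left hpos]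
  have hre : ‖z‖ * Real.cos (arg z) = z.re := norm_mul_cos_arg z
  change 2 * ‖z‖ ^ 2 ≤ ‖z‖ + z.re at hz
  nlinarith

lemma cardioid_subset_norm_sub_third_le : cardioid ⊆ {z : ℂ | ‖z - 1 / 3‖ ≤ 2 / 3} := by
  intro z hz
  change 2 * ‖z‖ ^ 2 ≤ ‖z‖ + z.re at hz
  have hsq : ‖z - 1 / 3‖ ^ 2 = ‖z‖ ^ 2 - 2 / 3 * z.re + 1 / 9 := by
    simp only [Complex.sq_norm, normSq_apply, sub_re, sub_im, div_re, div_im]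
    norm_num
    ring
  rw [Set.mem_ofPred_eq, ← sq_le_sq₀ (norm_nonneg _) (by norm_num), hsq]
  nlinarith [sq_nonneg (‖z‖ - 1)]

lemma neg_third_not_mem_cardioid : (-1 / 3 : ℂ) ∉ cardioid := by
  have hre : (-1 / 3 : ℂ).re = -1 / 3 := by norm_num
  have hnorm : ‖(-1 / 3 : ℂ)‖ = 1 / 3 := by
    rw [norm_div, norm_neg, norm_one, Complex.norm_ofNat]
  simp only [cardioid, Set.mem_ofPred_eq, hre, hnorm]
  norm_num

theorem srg_stmt16 :
    Set.image2 (· * ·) srgDisk srgDisk =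
      {c : ℂ | ∃ r φ : ℝ, -Real.pi < φ ∧ φ ≤ Real.pi ∧ 0 ≤ r ∧
        r ≤ (Real.cos (φ / 2)) ^ 2 ∧ c = (r : ℂ) * Complex.exp (φ * Complex.I)} ∧
    Set.image2 (· * ·) srgDisk srgDisk ⊂
      {z : ℂ | ‖z - 1 / 3‖ ≤ 2 / 3} := by
  have hsub : Set.image2 (· * ·) srgDisk srgDisk ⊆ {z : ℂ | ‖z - 1 / 3‖ ≤ 2 / 3} :=
    image2_mul_srgDisk_subset_cardioid.trans cardioid_subset_norm_sub_third_le
  refine ⟨Set.Subset.antisymm ?_ ?_, (Set.ssubset_iff_of_subset hsub).mpr ⟨-1 / 3, ?_, ?_⟩⟩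
  · intro z hz
    exact ⟨‖z‖, arg z, neg_pi_lt_arg z, arg_le_pi z, norm_nonneg z,
      norm_le_cos_sq_half_arg (image2_mul_srgDisk_subset_cardioid hz),
      (norm_mul_exp_arg_mul_I z).symm⟩
  · rintro _ ⟨r, φ, hφ₁, hφ₂, hr, hrφ, rfl⟩
    exact ofReal_mul_exp_mem_image2_mul_srgDisk hφ₁ hφ₂ hr hrφ
  · norm_num
  · exact fun h => neg_third_not_mem_cardioid (image2_mul_srgDisk_subset_cardioid h)
end
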